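/- Uniqueness of the common row norm (Lemma 1): Let p, q be positive integers with q < p. For k = 1, 2, let G_k be a p×q real matrix with diag(G_k G_k^T) = c_k² I for some c_k ≥ 0, and define ΔΣ_k = G_k G_k^T − c_k² I (the off-diagonal part of G_k G_k^T). If ΔΣ_1 = ΔΣ_2, then c_1 = c_2. -/

import Mathlib

open Matrix

lemma aux_false (p q : ℕ) (hqp : q < p) (G₁ G₂ : Matrix (Fin p) (Fin q) ℝ) (l : ℝ) (hl : 0 < l)
    (h : G₁ * G₁ᵀ = G₂ * G₂ᵀ + l • (1 : Matrix (Fin p) (Fin p) ℝ)) : False := by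
  have hps : (G₂ * G₂ᵀ).PosSemidef := by
    simpa using Matrix.posSemidef_self_mul_conjTranspose G₂
  have h1 : (G₁ * G₁ᵀ).PosDef := by
    rw [h, posDef_iff_dotProduct_mulVec]
    constructor
    · exact hps.1.add (by simp [Matrix.IsHermitian, Matrix.conjTranspose_smul])
    · intro x hx
      have h2 := hps.dotProduct_mulVec_nonneg x
      have h3 : (0:ℝ) < l * (star x ⬝ᵥ x) := by
        apply mul_pos hl
        simpa using (dotProduct_star_self_pos_iff (R := ℝ)).mpr hx
      calc (0:ℝ) < star x ⬝ᵥ (G₂ * G₂ᵀ) *ᵥ x + l * (star x ⬝ᵥ x) := by linarith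
        _ = star x ⬝ᵥ (G₂ * G₂ᵀ + l • 1) *ᵥ x := by
            simp [Matrix.add_mulVec, Matrix.smul_mulVec, dotProduct_add, dotProduct_smul,
              mul_comm]
  have hrank : (G₁ * G₁ᵀ).rank = p := by simpa using Matrix.rank_of_isUnit _ h1.isUnit
  have hle : (G₁ * G₁ᵀ).rank ≤ q :=
    le_trans (Matrix.rank_mul_le_left _ _) (Matrix.rank_le_width _)
  omega

/-- Uniqueness of the common row norm (Lemma 1): if two Gram matrices `G Gᵀ` with
constant diagonal `c² I` (with latent dimension `q < p`) have equal off-diagonal parts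
`G Gᵀ − c² I`, then the common row norms coincide. -/
theorem common_row_norm_unique (p q : ℕ) (hp : 0 < p) (hq : 0 < q) (hqp : q < p)
    (G₁ G₂ : Matrix (Fin p) (Fin q) ℝ) (c₁ c₂ : ℝ) (hc₁ : 0 ≤ c₁) (hc₂ : 0 ≤ c₂)
    (hG₁ : ∀ i, (G₁ * G₁ᵀ) i i = c₁ ^ 2)
    (hG₂ : ∀ i, (G₂ * G₂ᵀ) i i = c₂ ^ 2)
    (h : G₁ * G₁ᵀ - c₁ ^ 2 • (1 : Matrix (Fin p) (Fin p) ℝ) =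
         G₂ * G₂ᵀ - c₂ ^ 2 • (1 : Matrix (Fin p) (Fin p) ℝ)) :
    c₁ = c₂ := by
  have hsq : c₁ ^ 2 = c₂ ^ 2 := by
    rcases lt_trichotomy (c₁ ^ 2) (c₂ ^ 2) with hlt | heq | hgt
    · exfalso
      have h' : G₂ * G₂ᵀ = G₁ * G₁ᵀ + (c₂ ^ 2 - c₁ ^ 2) • (1 : Matrix (Fin p) (Fin p) ℝ) := by
        rw [sub_smul]; linear_combination (norm := abel) -h
      exact aux_false p q hqp G₂ G₁ _ (by linarith) h'
    · exact heq
    · exfalso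
      have h' : G₁ * G₁ᵀ = G₂ * G₂ᵀ + (c₁ ^ 2 - c₂ ^ 2) • (1 : Matrix (Fin p) (Fin p) ℝ) := by
        rw [sub_smul]; linear_combination (norm := abel) h
      exact aux_false p q hqp G₁ G₂ _ (by linarith) h'
  exact le_antisymm (by nlinarith) (by nlinarith)
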